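/- With σ the logistic sigmoid, define Π(μ,Σ) = ∫_ℝ σ(ξ) N(ξ|μ,Σ) dξ for μ ∈ ℝ and Σ > 0. Then: (i) for every fixed Σ > 0, the map μ ↦ Π(μ,Σ) is strictly increasing on ℝ; (ii) for every fixed μ > 0, the map Σ ↦ Π(μ,Σ) is strictly decreasing on (0,∞); (iii) for every fixed μ < 0, the map Σ ↦ Π(μ,Σ) is strictly increasing on (0,∞); and (iv) Π(0,Σ) = 1/2 for every Σ > 0. -/

import Mathlib

open MeasureTheory Real Set

/-- One-dimensional Gaussian density `N(ξ|μ,v) = (2πv)^{-1/2} exp(−(ξ−μ)²/(2v))`. -/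
noncomputable def gaussPDF (μ v ξ : ℝ) : ℝ :=
  (Real.sqrt (2 * Real.pi * v))⁻¹ * Real.exp (-((ξ - μ) ^ 2) / (2 * v))

/-- The logistic sigmoid `σ(ξ) = 1/(1+e^{−ξ})`. -/
noncomputable def logistic (ξ : ℝ) : ℝ := 1 / (1 + Real.exp (-ξ))

/-- `Π(μ,v) = ∫_ℝ σ(ξ) N(ξ|μ,v) dξ`. -/
noncomputable def predPost (μ v : ℝ) : ℝ := ∫ ξ : ℝ, logistic ξ * gaussPDF μ v ξ

/-!
The substitution `ξ = μ + √v z` with `z` standard normal gives `Π(μ,v) = E[σ(μ + √v z)]`, which is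
strictly increasing in `μ` because `σ` is. Averaging over `±z` with the identity
`σ(μ + t) + σ(μ - t) = 1 + sinh μ / (cosh μ + cosh t)` gives
`Π(μ,v) = (1 + sinh μ · E[(cosh μ + cosh (√v z))⁻¹]) / 2`. Since `cosh` increases with `|t|`, the
expectation is strictly decreasing in `v`, and the sign of `sinh μ` decides the direction in `v`
(and gives `1/2` at `μ = 0`).
-/

open ProbabilityTheory NNReal

lemma integral_lt_integral_of_ae_lt {α : Type*} [MeasurableSpace α] {ν : Measure α} [NeZero ν]
    {f g : α → ℝ} (hf : Integrable f ν) (hg : Integrable g ν) (hlt : ∀ᵐ x ∂ν, f x < g x) :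
    ∫ x, f x ∂ν < ∫ x, g x ∂ν := by
  have hsupp : ν (Function.support fun x => g x - f x)ᶜ = 0 :=
    ae_iff.1 (hlt.mono fun x h => (sub_pos.2 h).ne')
  have hpos : 0 < ∫ x, g x - f x ∂ν := by
    rw [integral_pos_iff_support_of_nonneg_ae (f := fun x => g x - f x)
      (hlt.mono fun x h => (sub_pos.2 h).le) (hg.sub hf), measure_congr (ae_eq_univ.2 hsupp)]
    exact Measure.measure_univ_pos.2 (NeZero.ne ν)
  rw [integral_sub hg hf] at hpos
  linarith

lemma integral_gaussianReal_eq_integral_std {f : ℝ → ℝ} {μ : ℝ} {v : ℝ≥0}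
    (hf : AEStronglyMeasurable f (gaussianReal μ v)) :
    ∫ x, f x ∂gaussianReal μ v = ∫ z, f (μ + √(v : ℝ) * z) ∂gaussianReal 0 1 := by
  have hmap : (gaussianReal 0 1).map (fun z => μ + √(v : ℝ) * z) = gaussianReal μ v := by
    change Measure.map ((μ + ·) ∘ (√(v : ℝ) * ·)) _ = _
    rw [← Measure.map_map (by fun_prop) (by fun_prop), gaussianReal_map_const_mul,
      gaussianReal_map_const_add]
    congr 1
    · simp
    · ext; simp
  rw [← hmap] at hf ⊢
  exact integral_map (by fun_prop) hf

lemma integral_comp_neg_gaussianReal (f : ℝ → ℝ) (v : ℝ≥0) :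
    ∫ z, f (-z) ∂gaussianReal 0 v = ∫ z, f z ∂gaussianReal 0 v := by
  conv_rhs => rw [← neg_zero, ← gaussianReal_map_neg]
  exact (integral_map_equiv (MeasurableEquiv.neg ℝ) f).symm

lemma logistic_eq_sigmoid : logistic = sigmoid := by
  ext x
  rw [logistic, sigmoid_def, one_div]

lemma predPost_eq_integral_gaussianReal (μ : ℝ) {v : ℝ} (hv : 0 < v) :
    predPost μ v = ∫ z, sigmoid (μ + √v * z) ∂gaussianReal 0 1 := by
  have hv' : (⟨v, hv.le⟩ : ℝ≥0) ≠ 0 := ne_of_gt hv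
  calc predPost μ v = ∫ x, sigmoid x ∂gaussianReal μ ⟨v, hv.le⟩ := by
        simp_rw [integral_gaussianReal_eq_integral_smul hv', smul_eq_mul, predPost,
          logistic_eq_sigmoid, mul_comm (sigmoid _)]
        rfl
    _ = _ := integral_gaussianReal_eq_integral_std continuous_sigmoid.aestronglyMeasurable

lemma sigmoid_add_add_sigmoid_sub (μ t : ℝ) :
    sigmoid (μ + t) + sigmoid (μ - t) = 1 + sinh μ / (cosh μ + cosh t) := by
  rw [sigmoid_def, sigmoid_def, sinh_eq, cosh_eq, cosh_eq, neg_add, exp_add, neg_sub', exp_sub]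
  simp only [exp_neg]
  have ha := exp_pos μ
  have hb := exp_pos t
  field_simp
  ring

section

variable {α : Type*} [MeasurableSpace α] {ν : Measure α} [IsFiniteMeasure ν] {f : α → ℝ}

lemma integrable_sigmoid_comp (hf : Measurable f) : Integrable (fun x => sigmoid (f x)) ν :=
  Integrable.of_bound (continuous_sigmoid.measurable.comp hf).aestronglyMeasurable 1 <|
    ae_of_all _ fun x => by rw [norm_of_nonneg (sigmoid_nonneg _)]; exact sigmoid_le_one _

lemma integrable_inv_add_cosh_comp {c : ℝ} (hc : -1 < c) (hf : Measurable f) :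
    Integrable (fun x => (c + cosh (f x))⁻¹) ν := by
  refine Integrable.of_bound (by fun_prop) (c + 1)⁻¹ (ae_of_all _ fun x => ?_)
  have hcosh := one_le_cosh (f x)
  rw [norm_of_nonneg (inv_nonneg.2 (by linarith))]
  exact inv_anti₀ (by linarith) (by linarith)

lemma strictMono_integral_sigmoid_add [NeZero ν] (hf : Measurable f) :
    StrictMono fun μ => ∫ x, sigmoid (μ + f x) ∂ν := fun _ _ h =>
  integral_lt_integral_of_ae_lt (integrable_sigmoid_comp (hf.const_add _))
    (integrable_sigmoid_comp (hf.const_add _))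
    (ae_of_all _ fun _ => sigmoid_strictMono (add_lt_add_left h _))

end

lemma integral_sigmoid_add_mul_gaussianReal (μ s : ℝ) :
    ∫ z, sigmoid (μ + s * z) ∂gaussianReal 0 1
      = (1 + sinh μ * ∫ z, (cosh μ + cosh (s * z))⁻¹ ∂gaussianReal 0 1) / 2 := by
  have hflip : ∫ z, sigmoid (μ - s * z) ∂gaussianReal 0 1
      = ∫ z, sigmoid (μ + s * z) ∂gaussianReal 0 1 := by
    simpa [mul_neg, ← sub_eq_add_neg] using
      integral_comp_neg_gaussianReal (fun z => sigmoid (μ + s * z)) 1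
  have hcosh : Integrable (fun z => (cosh μ + cosh (s * z))⁻¹) (gaussianReal 0 1) :=
    integrable_inv_add_cosh_comp (by linarith [one_le_cosh μ]) (by fun_prop)
  have hsum : ∫ z, sigmoid (μ + s * z) ∂gaussianReal 0 1
      + ∫ z, sigmoid (μ - s * z) ∂gaussianReal 0 1
      = 1 + sinh μ * ∫ z, (cosh μ + cosh (s * z))⁻¹ ∂gaussianReal 0 1 := by
    rw [← integral_add (integrable_sigmoid_comp (by fun_prop))
      (integrable_sigmoid_comp (by fun_prop))]
    simp_rw [sigmoid_add_add_sigmoid_sub, div_eq_mul_inv]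
    rw [integral_add (integrable_const 1) (hcosh.const_mul _), integral_const_mul]
    simp
  linarith

lemma strictAntiOn_integral_inv_add_cosh_sqrt_mul {c : ℝ} (hc : -1 < c) :
    StrictAntiOn (fun v : ℝ => ∫ z, (c + cosh (√v * z))⁻¹ ∂gaussianReal 0 1) (Ici 0) := by
  intro v₁ hv₁ v₂ _ h
  have := nullSingletonClass_gaussianReal (μ := 0) one_ne_zero
  refine integral_lt_integral_of_ae_lt (integrable_inv_add_cosh_comp hc (by fun_prop))
    (integrable_inv_add_cosh_comp hc (by fun_prop)) ?_
  filter_upwards [Measure.ae_ne _ 0] with z hz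
  have hlt : |√v₁ * z| < |√v₂ * z| := by
    rw [abs_mul, abs_mul, abs_of_nonneg (sqrt_nonneg _), abs_of_nonneg (sqrt_nonneg _)]
    exact mul_lt_mul_of_pos_right (sqrt_lt_sqrt hv₁ h) (abs_pos.2 hz)
  exact inv_strictAnti₀ (by linarith [one_le_cosh (√v₁ * z)])
    ((add_lt_add_iff_left c).2 (cosh_lt_cosh.2 hlt))

/-- Monotonicity of the logistic-likelihood predictive posterior probability:
(i) strictly increasing in `μ` for fixed `v > 0`;
(ii) strictly decreasing in `v` on `(0,∞)` for fixed `μ > 0`;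
(iii) strictly increasing in `v` on `(0,∞)` for fixed `μ < 0`;
(iv) `Π(0,v) = 1/2` for every `v > 0`. -/
theorem predPost_monotonicity :
    (∀ v : ℝ, 0 < v → StrictMono (fun μ : ℝ => predPost μ v)) ∧
    (∀ μ : ℝ, 0 < μ → StrictAntiOn (fun v : ℝ => predPost μ v) (Set.Ioi 0)) ∧
    (∀ μ : ℝ, μ < 0 → StrictMonoOn (fun v : ℝ => predPost μ v) (Set.Ioi 0)) ∧
    (∀ v : ℝ, 0 < v → predPost 0 v = 1 / 2) := by
  have hpost (μ : ℝ) {v : ℝ} (hv : 0 < v) :=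
    (predPost_eq_integral_gaussianReal μ hv).trans (integral_sigmoid_add_mul_gaussianReal μ √v)
  have hanti (μ : ℝ) := (strictAntiOn_integral_inv_add_cosh_sqrt_mul
    (c := cosh μ) (by linarith [one_le_cosh μ])).mono Ioi_subset_Ici_self
  refine ⟨fun v hv => ?_, fun μ hμ v₁ hv₁ v₂ hv₂ h => ?_, fun μ hμ v₁ hv₁ v₂ hv₂ h => ?_,
    fun v hv => ?_⟩
  · simp_rw [predPost_eq_integral_gaussianReal _ hv]
    exact strictMono_integral_sigmoid_add (by fun_prop)
  · have := hanti μ hv₁ hv₂ h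
    simp only [hpost μ hv₁, hpost μ hv₂]
    nlinarith [sinh_pos_iff.2 hμ]
  · have := hanti μ hv₁ hv₂ h
    simp only [hpost μ hv₁, hpost μ hv₂]
    nlinarith [sinh_neg_iff.2 hμ]
  · rw [hpost 0 hv, sinh_zero]
    norm_num
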